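/- Let X and Y be (real) linear n-normed spaces and let f : X → Y be an n-isometry with f(0) = 0. Then the following conditions are equivalent: (i) f is additive, i.e. f(x₀+x₁) = f(x₀)+f(x₁) for all x₀, x₁ ∈ X; (ii) f preserves midpoints, i.e. f((x₀+x₁)/2) = (f(x₀)+f(x₁))/2 for all x₀, x₁ ∈ X with x₀ ≠ x₁; (iii) f preserves barycenters of triangles, i.e. f((x₀+x₁+x₂)/3) = (f(x₀)+f(x₁)+f(x₂))/3 for all x₀, x₁, x₂ ∈ X that are not 2-collinear. -/

import Mathlib

/-!
Midpoint preservation for the pair `0, x` gives `f (x / 2) = f x / 2`, and additivity follows at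
once. For barycenters, put `g x = f x + f (-x)`. The triangle `x, y, -y` gives
`f x + g y = 3 • f (x / 3)`, so `g` is constant on the vectors independent of a fixed `x`; as `x`,
`y`, `x + y` are pairwise independent, `g` takes one value on all three. The triangles
`x, y, -(x + y)` and `-x, -y, x + y` have barycenter `0`, which makes the sum of these three values
vanish, so `f` is odd. Then `f` is additive on independent pairs, and a dependent pair `x, a • x`
is split as `(x + b) + (a • x - b)` with `b` independent of `x`.
-/

/-- `N` is a (real) linear `n`-norm on the real vector space `X`. -/
structure IsLinearNNorm (X : Type*) [AddCommGroup X] [Module ℝ X] {n : ℕ}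
    (N : (Fin n → X) → ℝ) : Prop where
  nonneg : ∀ x, 0 ≤ N x
  eq_zero_iff : ∀ x, N x = 0 ↔ ¬ LinearIndependent ℝ x
  perm : ∀ (x : Fin n → X) (σ : Equiv.Perm (Fin n)), N (x ∘ σ) = N x
  smul : ∀ (x : Fin n → X) (i : Fin n) (α : ℝ) (y : X),
    N (Function.update x i (α • y)) = |α| * N (Function.update x i y)
  add_le : ∀ (x : Fin n → X) (i : Fin n) (y z : X),
    N (Function.update x i (y + z)) ≤
      N (Function.update x i y) + N (Function.update x i z)

/-- `f : X → Y` is an `n`-isometry with respect to the `n`-norms `NX`, `NY`. -/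
def IsNIsometryReal {X Y : Type*} [AddCommGroup X] [Module ℝ X]
    [AddCommGroup Y] [Module ℝ Y] {n : ℕ}
    (NX : (Fin n → X) → ℝ) (NY : (Fin n → Y) → ℝ) (f : X → Y) : Prop :=
  ∀ (x₀ : X) (x : Fin n → X), NY (fun i => f (x i) - f x₀) = NX (fun i => x i - x₀)

/-- Three points `x₀, x₁, x₂` are 2-collinear if `x₁ - x₀` and `x₂ - x₀`
are linearly dependent. -/
def Collinear2Real {X : Type*} [AddCommGroup X] [Module ℝ X]
    (x₀ x₁ x₂ : X) : Prop :=
  ¬ LinearIndependent ℝ ![x₁ - x₀, x₂ - x₀]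

theorem LinearIndependent.pair_of_eq_add_smul {K V : Type*} [Field K] [AddCommGroup V]
    [Module K V] {x y v w : V} (h : LinearIndependent K ![x, y]) (a b c d : K)
    (hdet : a * d ≠ b * c) (hv : v = a • x + b • y) (hw : w = c • x + d • y) :
    LinearIndependent K ![v, w] :=
  hv ▸ hw ▸ (LinearIndependent.pair_add_smul_add_smul_iff a b c d).2 ⟨h, hdet⟩

theorem map_add_of_map_add_of_linearIndependent {K X Y : Type*} [Field K] [AddCommGroup X]
    [Module K X] [AddCommGroup Y] {f : X → Y} (hX : 1 < Module.rank K X) (hf0 : f 0 = 0)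
    (hodd : ∀ x, f (-x) = -f x)
    (hind : ∀ x y, LinearIndependent K ![x, y] → f (x + y) = f x + f y) (x y : X) :
    f (x + y) = f x + f y := by
  rcases eq_or_ne x 0 with rfl | hx
  · simp [hf0]
  rcases eq_or_ne y 0 with rfl | hy
  · simp [hf0]
  rcases eq_or_ne (x + y) 0 with hxy0 | hxy0
  · simp [eq_neg_of_add_eq_zero_right hxy0, hodd, hf0]
  by_cases hxy : LinearIndependent K ![x, y]
  · exact hind x y hxy
  obtain ⟨a, rfl⟩ : ∃ a : K, a • x = y := by
    simpa [LinearIndependent.pair_iff' hx] using hxy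
  have ha0 : a ≠ 0 := by rintro rfl; simp at hy
  have ha1 : a ≠ -1 := by rintro rfl; simp at hxy0
  obtain ⟨b, hb⟩ := exists_linearIndependent_pair_of_one_lt_rank hX hx
  calc f (x + a • x) = f ((x + b) + (a • x + -b)) := by congr 1; abel
    _ = f (x + b) + f (a • x + -b) :=
        hind _ _ (hb.pair_of_eq_add_smul 1 1 a (-1) (by contrapose! ha1; simpa using ha1.symm)
          (by module) (by module))
    _ = f x + f b + (f (a • x) + f (-b)) := by
        rw [hind _ _ hb, hind _ _ (hb.pair_of_eq_add_smul a 0 0 (-1) (by simpa using ha0)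
          (by module) (by module))]
    _ = f x + f (a • x) := by rw [hodd]; abel

section

variable {X Y : Type*} [AddCommGroup X] [Module ℝ X] [AddCommGroup Y] [Module ℝ Y]

def PreservesMidpoints (f : X → Y) : Prop :=
  ∀ x₀ x₁ : X, x₀ ≠ x₁ → f ((2 : ℝ)⁻¹ • (x₀ + x₁)) = (2 : ℝ)⁻¹ • (f x₀ + f x₁)

def PreservesBarycenters (f : X → Y) : Prop :=
  ∀ x₀ x₁ x₂ : X, ¬ Collinear2Real x₀ x₁ x₂ →
    f ((3 : ℝ)⁻¹ • (x₀ + x₁ + x₂)) = (3 : ℝ)⁻¹ • (f x₀ + f x₁ + f x₂)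

variable {f : X → Y}

theorem preservesMidpoints_of_map_add (hadd : ∀ x y, f (x + y) = f x + f y) :
    PreservesMidpoints f := fun x₀ x₁ _ => by
  simpa [hadd] using map_inv_natCast_smul (AddMonoidHom.mk' f hadd) ℝ ℝ 2 (x₀ + x₁)

theorem preservesBarycenters_of_map_add (hadd : ∀ x y, f (x + y) = f x + f y) :
    PreservesBarycenters f := fun x₀ x₁ x₂ _ => by
  simpa [hadd] using map_inv_natCast_smul (AddMonoidHom.mk' f hadd) ℝ ℝ 3 (x₀ + x₁ + x₂)

theorem PreservesMidpoints.map_add (hf0 : f 0 = 0) (h : PreservesMidpoints f) (x y : X) :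
    f (x + y) = f x + f y := by
  have hmid : ∀ x y, f ((2 : ℝ)⁻¹ • (x + y)) = (2 : ℝ)⁻¹ • (f x + f y) := by
    intro x y
    rcases eq_or_ne x y with rfl | hxy
    · rw [← two_smul ℝ x, ← two_smul ℝ (f x), inv_smul_smul₀ two_ne_zero,
        inv_smul_smul₀ two_ne_zero]
    · exact h x y hxy
  have hhalf : f ((2 : ℝ)⁻¹ • (x + y)) = (2 : ℝ)⁻¹ • f (x + y) := by
    simpa [hf0] using hmid 0 (x + y)
  exact smul_right_injective Y (inv_ne_zero two_ne_zero) (hhalf.symm.trans (hmid x y))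

namespace PreservesBarycenters

theorem map_add_add_map_neg_add_eq_zero (hf0 : f 0 = 0) (h : PreservesBarycenters f) {x y : X}
    (hxy : LinearIndependent ℝ ![x, y]) : f x + f y + f (-(x + y)) = 0 := by
  have hbar := h x y (-(x + y)) fun hcol =>
    hcol (hxy.pair_of_eq_add_smul (-1) 1 (-2) (-1) (by norm_num) (by module) (by module))
  rw [show x + y + -(x + y) = 0 by abel, smul_zero, hf0] at hbar
  exact (smul_eq_zero.mp hbar.symm).resolve_left (by norm_num)

theorem add_map_add_map_neg_eq (h : PreservesBarycenters f) {x y : X}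
    (hxy : LinearIndependent ℝ ![x, y]) :
    f x + (f y + f (-y)) = (3 : ℝ) • f ((3 : ℝ)⁻¹ • x) := by
  have hbar := h x y (-y) fun hcol =>
    hcol (hxy.pair_of_eq_add_smul (-1) 1 (-1) (-1) (by norm_num) (by module) (by module))
  rw [show x + y + -y = x by abel] at hbar
  rw [hbar, smul_inv_smul₀ three_ne_zero, add_assoc]

theorem map_neg (hX : 1 < Module.rank ℝ X) (hf0 : f 0 = 0) (h : PreservesBarycenters f)
    (x : X) : f (-x) = -f x := by
  set g : X → Y := fun x => f x + f (-x) with hg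
  have hg_eq : ∀ {x y z : X}, LinearIndependent ℝ ![x, y] → LinearIndependent ℝ ![x, z] →
      g y = g z := fun hxy hxz =>
    add_left_cancel ((h.add_map_add_map_neg_eq hxy).trans (h.add_map_add_map_neg_eq hxz).symm)
  rcases eq_or_ne x 0 with rfl | hx
  · simp [hf0]
  obtain ⟨y, hxy⟩ := exists_linearIndependent_pair_of_one_lt_rank hX hx
  have hyx := LinearIndependent.pair_symm_iff.mp hxy
  have hgx : g x = g (x + y) := hg_eq hyx (by simpa [add_comm x y] using hyx)
  have hgy : g y = g (x + y) := hg_eq hxy (by simpa using hxy)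
  have hsum : g x + g y + g (x + y) = 0 := by
    have h₁ := h.map_add_add_map_neg_add_eq_zero hf0 hxy
    have h₂ := h.map_add_add_map_neg_add_eq_zero hf0 (x := -x) (y := -y) (by simpa using hxy)
    rw [← neg_add, neg_neg] at h₂
    calc g x + g y + g (x + y)
        = (f x + f y + f (-(x + y))) + (f (-x) + f (-y) + f (x + y)) := by simp only [hg]; abel
      _ = 0 := by rw [h₁, h₂, add_zero]
  have h3 : (3 : ℝ) • g x = 0 := by
    rw [← hsum, hgx, hgy]
    module
  exact eq_neg_of_add_eq_zero_right ((smul_eq_zero.mp h3).resolve_left three_ne_zero)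

theorem map_add (hX : 1 < Module.rank ℝ X) (hf0 : f 0 = 0) (h : PreservesBarycenters f)
    (x y : X) : f (x + y) = f x + f y := by
  refine map_add_of_map_add_of_linearIndependent hX hf0 (h.map_neg hX hf0) (fun x y hxy => ?_) x y
  have hsum := h.map_add_add_map_neg_add_eq_zero hf0 hxy
  rw [h.map_neg hX hf0, ← sub_eq_add_neg, sub_eq_zero] at hsum
  exact hsum.symm

end PreservesBarycenters

end

theorem real_nisometry_additive_iff_midpoint_iff_barycenter_general {X Y : Type*}
    [AddCommGroup X] [Module ℝ X] [AddCommGroup Y] [Module ℝ Y] {n : ℕ}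
    (hn : 2 ≤ n)
    (hdX : (n : Cardinal) ≤ Module.rank ℝ X)
    (f : X → Y) (hf0 : f 0 = 0) :
    ((∀ x₀ x₁ : X, f (x₀ + x₁) = f x₀ + f x₁) ↔
      (∀ x₀ x₁ : X, x₀ ≠ x₁ →
        f ((2 : ℝ)⁻¹ • (x₀ + x₁)) = (2 : ℝ)⁻¹ • (f x₀ + f x₁))) ∧
    ((∀ x₀ x₁ : X, x₀ ≠ x₁ →
        f ((2 : ℝ)⁻¹ • (x₀ + x₁)) = (2 : ℝ)⁻¹ • (f x₀ + f x₁)) ↔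
      (∀ x₀ x₁ x₂ : X, ¬ Collinear2Real x₀ x₁ x₂ →
        f ((3 : ℝ)⁻¹ • (x₀ + x₁ + x₂)) = (3 : ℝ)⁻¹ • (f x₀ + f x₁ + f x₂))) := by
  have hX : 1 < Module.rank ℝ X := lt_of_lt_of_le (by exact_mod_cast hn) hdX
  have hmid : (∀ x y : X, f (x + y) = f x + f y) ↔ PreservesMidpoints f :=
    ⟨preservesMidpoints_of_map_add, fun h => h.map_add hf0⟩
  have hbar : (∀ x y : X, f (x + y) = f x + f y) ↔ PreservesBarycenters f :=
    ⟨preservesBarycenters_of_map_add, fun h => h.map_add hX hf0⟩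
  exact ⟨hmid, hmid.symm.trans hbar⟩

/-- for an `n`-isometry `f` between real linear `n`-normed
spaces with `f 0 = 0`, additivity, midpoint preservation, and barycenter
preservation are equivalent. -/
theorem real_nisometry_additive_iff_midpoint_iff_barycenter {X Y : Type*}
    [AddCommGroup X] [Module ℝ X] [AddCommGroup Y] [Module ℝ Y] {n : ℕ}
    (hn : 2 ≤ n) (NX : (Fin n → X) → ℝ) (NY : (Fin n → Y) → ℝ)
    (hNX : IsLinearNNorm X NX) (hNY : IsLinearNNorm Y NY)
    (hdX : (n : Cardinal) ≤ Module.rank ℝ X)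
    (hdY : (n : Cardinal) ≤ Module.rank ℝ Y)
    (f : X → Y) (hf : IsNIsometryReal NX NY f) (hf0 : f 0 = 0) :
    ((∀ x₀ x₁ : X, f (x₀ + x₁) = f x₀ + f x₁) ↔
      (∀ x₀ x₁ : X, x₀ ≠ x₁ →
        f ((2 : ℝ)⁻¹ • (x₀ + x₁)) = (2 : ℝ)⁻¹ • (f x₀ + f x₁))) ∧
    ((∀ x₀ x₁ : X, x₀ ≠ x₁ →
        f ((2 : ℝ)⁻¹ • (x₀ + x₁)) = (2 : ℝ)⁻¹ • (f x₀ + f x₁)) ↔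
      (∀ x₀ x₁ x₂ : X, ¬ Collinear2Real x₀ x₁ x₂ →
        f ((3 : ℝ)⁻¹ • (x₀ + x₁ + x₂)) = (3 : ℝ)⁻¹ • (f x₀ + f x₁ + f x₂))) :=
  real_nisometry_additive_iff_midpoint_iff_barycenter_general hn hdX f hf0
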